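/- arXiv:1512.00218 — 2 statements merged into one kernel-verified Lean document; each statement's English description precedes it below -/
import Mathlib

section
/- Let f ∈ H^β_B with norm R, meaning f : [0,1] → [0,1] is in C^β with |f^{(j)}(x)| ≤ R^{j/β} · min(f(x), 1-f(x))^{(β-j)/β} for 1 ≤ j ≤ ⌊β⌋, and |f^{(⌊β⌋)}(x) - f^{(⌊β⌋)}(y)| ≤ R|x-y|^{β-⌊β⌋}. Let a > 0 satisfy (e^a - 1) + a^β/⌊β⌋! ≤ 1/2. Then for |h| ≤ a·(min(f(x),1-f(x))/R)^{1/β} with x+h ∈ [0,1], one has |f(x+h) - f(x)| ≤ (1/2)·min(f(x), 1-f(x)), and consequently (1/4)·f(x)(1-f(x)) ≤ f(x+h)(1-f(x+h)) ≤ (9/4)·f(x)(1-f(x)). -/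
/-!
Write `m = min (f x) (1 - f x)` and `k = ⌊β⌋`. Taylor's formula of order `k` at `x`, with the
top derivative controlled by the Hölder condition, bounds `|f (x + h) - f x|` by
`∑_{1 ≤ j ≤ k} |f⁽ʲ⁾ x| |h|ʲ / j! + R |h|^β / k!`. On the scale `|h| ≤ a (m / R)^(1/β)` the
flatness bounds make the `j`-th term at most `aʲ m / j!` and the last one at most `a^β m / k!`,
so the sum is at most `((eᵃ - 1) + a^β / k!) m ≤ m / 2`. Since `f (x + h)` then stays within
`m / 2` of `f x`, the product `f (1 - f)` changes by at most the factors `1/4` and `9/4`.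
-/

open Real Set
open scoped Nat

lemma taylorWithinEval_eq_sum_iteratedDeriv {f : ℝ → ℝ} {n : ℕ} (hf : ContDiff ℝ n f)
    {s : Set ℝ} (hs : UniqueDiffOn ℝ s) {x₀ : ℝ} (hx₀ : x₀ ∈ s) (x : ℝ) :
    taylorWithinEval f n s x₀ x =
      ∑ j ∈ Finset.range (n + 1), iteratedDeriv j f x₀ * (x - x₀) ^ j / j ! := by
  rw [taylor_within_apply]
  refine Finset.sum_congr rfl fun j hj => ?_
  have hjn : (j : WithTop ℕ∞) ≤ n := by exact_mod_cast Finset.mem_range_succ_iff.mp hj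
  rw [iteratedDerivWithin_eq_iteratedDeriv hs (hf.contDiffAt.of_le hjn) hx₀, smul_eq_mul]
  ring

lemma exists_sub_eq_taylor_lagrange {f : ℝ → ℝ} {n : ℕ} (hf : ContDiff ℝ (n + 1 : ℕ) f)
    (x₀ x : ℝ) :
    ∃ ξ ∈ uIcc x₀ x, f x - f x₀ =
      ∑ j ∈ Finset.Icc 1 n, iteratedDeriv j f x₀ * (x - x₀) ^ j / j ! +
        iteratedDeriv (n + 1) f ξ * (x - x₀) ^ (n + 1) / (n + 1)! := by
  rcases eq_or_ne x₀ x with rfl | hne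
  · refine ⟨x₀, left_mem_uIcc, ?_⟩
    simp +contextual [Finset.sum_eq_zero, Finset.mem_Icc, Nat.one_le_iff_ne_zero]
  obtain ⟨ξ, hξ, h⟩ :=
    taylor_mean_remainder_lagrange_iteratedDeriv hne (by exact_mod_cast hf.contDiffOn)
  refine ⟨ξ, uIoo_subset_uIcc_self hξ, ?_⟩
  rw [taylorWithinEval_eq_sum_iteratedDeriv (hf.of_le (by exact_mod_cast n.le_succ))
    (uniqueDiffOn_uIcc hne) left_mem_uIcc, Finset.sum_range_eq_add_Ico _ (by positivity),
    Finset.Ico_add_one_right_eq_Icc] at h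
  simp only [iteratedDeriv_zero, pow_zero, Nat.factorial_zero, Nat.cast_one, mul_one, div_one] at h
  linarith

lemma abs_sub_le_taylor_of_abs_iteratedDeriv_sub_le {f : ℝ → ℝ} {k : ℕ} (hf : ContDiff ℝ k f)
    {x₀ x C : ℝ} (hC : ∀ ξ ∈ uIcc x₀ x, |iteratedDeriv k f ξ - iteratedDeriv k f x₀| ≤ C) :
    |f x - f x₀| ≤ ∑ j ∈ Finset.Icc 1 k, |iteratedDeriv j f x₀| * |x - x₀| ^ j / j ! +
      C * |x - x₀| ^ k / k ! := by
  cases k with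
  | zero => simpa using hC x right_mem_uIcc
  | succ n =>
    obtain ⟨ξ, hξ, h⟩ := exists_sub_eq_taylor_lagrange hf x₀ x
    set d := x - x₀
    have hsplit : f x - f x₀ = ∑ j ∈ Finset.Icc 1 (n + 1), iteratedDeriv j f x₀ * d ^ j / j ! +
        (iteratedDeriv (n + 1) f ξ - iteratedDeriv (n + 1) f x₀) * d ^ (n + 1) / (n + 1)! := by
      rw [h, Finset.sum_Icc_succ_top (by omega)]
      ring
    have hrem : |(iteratedDeriv (n + 1) f ξ - iteratedDeriv (n + 1) f x₀) * d ^ (n + 1) / (n + 1)!|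
        ≤ C * |d| ^ (n + 1) / (n + 1)! := by
      rw [abs_div, abs_mul, abs_pow, Nat.abs_cast]
      gcongr
      exact hC ξ hξ
    rw [hsplit]
    refine (abs_add_le _ _).trans (add_le_add ?_ hrem)
    refine (Finset.abs_sum_le_sum_abs _ _).trans (Finset.sum_le_sum fun j _ => ?_)
    rw [abs_div, abs_mul, abs_pow, Nat.abs_cast]

lemma rpow_mul_rpow_mul_rpow_le {β R m a t s : ℝ} (hβ : 0 < β) (hR : 0 < R) (hm : 0 ≤ m)
    (ha : 0 ≤ a) (ht : 0 ≤ t) (hs : 0 ≤ s) (hta : t ≤ a * (m / R) ^ (1 / β)) :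
    R ^ (s / β) * m ^ ((β - s) / β) * t ^ s ≤ a ^ s * m := by
  have hts : t ^ s ≤ a ^ s * m ^ (s / β) / R ^ (s / β) := by
    calc t ^ s ≤ (a * (m / R) ^ (1 / β)) ^ s := rpow_le_rpow ht hta hs
      _ = a ^ s * m ^ (s / β) / R ^ (s / β) := by
        rw [mul_rpow ha (by positivity), ← rpow_mul (by positivity), div_rpow hm hR.le,
          one_div_mul_eq_div, mul_div_assoc]
  have hexp : (β - s) / β + s / β = 1 := by field_simp; ring
  calc R ^ (s / β) * m ^ ((β - s) / β) * t ^ s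
      ≤ R ^ (s / β) * m ^ ((β - s) / β) * (a ^ s * m ^ (s / β) / R ^ (s / β)) := by gcongr
    _ = a ^ s * m ^ ((β - s) / β + s / β) := by
      rw [rpow_add' hm (by rw [hexp]; exact one_ne_zero)]
      field_simp
    _ = a ^ s * m := by rw [hexp, rpow_one]

lemma abs_mul_pow_le_of_abs_le_rpow_mul_rpow {β R m a t D : ℝ} {j : ℕ} (hβ : 0 < β) (hR : 0 < R)
    (hm : 0 ≤ m) (ha : 0 ≤ a) (ht : 0 ≤ t) (hta : t ≤ a * (m / R) ^ (1 / β))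
    (hD : |D| ≤ R ^ ((j : ℝ) / β) * m ^ ((β - j) / β)) :
    |D| * t ^ j ≤ a ^ j * m := by
  have := rpow_mul_rpow_mul_rpow_le hβ hR hm ha ht (Nat.cast_nonneg j) hta
  rw [rpow_natCast, rpow_natCast] at this
  exact (mul_le_mul_of_nonneg_right hD (by positivity)).trans this

lemma mul_rpow_le_of_le_mul_rpow {β R m a t : ℝ} (hβ : 0 < β) (hR : 0 < R) (hm : 0 ≤ m)
    (ha : 0 ≤ a) (ht : 0 ≤ t) (hta : t ≤ a * (m / R) ^ (1 / β)) :
    R * t ^ β ≤ a ^ β * m := by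
  simpa [hβ.ne'] using rpow_mul_rpow_mul_rpow_le hβ hR hm ha ht hβ.le hta

lemma sum_Icc_pow_div_factorial_le_exp_sub_one {a : ℝ} (ha : 0 ≤ a) (k : ℕ) :
    ∑ j ∈ Finset.Icc 1 k, a ^ j / j ! ≤ exp a - 1 := by
  have h := sum_le_exp_of_nonneg ha (k + 1)
  rw [Finset.sum_range_eq_add_Ico _ (by positivity), Finset.Ico_add_one_right_eq_Icc] at h
  simp only [pow_zero, Nat.factorial_zero, Nat.cast_one, div_one] at h
  linarith

lemma mul_one_sub_bounds_of_abs_sub_le {u v : ℝ} (h : |v - u| ≤ min u (1 - u) / 2) :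
    1 / 4 * (u * (1 - u)) ≤ v * (1 - v) ∧ v * (1 - v) ≤ 9 / 4 * (u * (1 - u)) := by
  obtain ⟨h₁, h₂⟩ := abs_le.mp h
  rcases min_cases u (1 - u) with ⟨hmin, hu⟩ | ⟨hmin, hu⟩ <;> rw [hmin] at h₁ h₂ <;>
    constructor <;> nlinarith

theorem stmt_4_general (β : ℝ) (hβ : 0 < β) (k0 : ℕ) (hk0 : (k0 : ℝ) < β)
    (f : ℝ → ℝ) (R : ℝ) (hR : 0 < R)
    (hf : ContDiff ℝ k0 f)
    (hrange : ∀ x ∈ Icc (0:ℝ) 1, f x ∈ Icc (0:ℝ) 1)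
    (hderiv : ∀ j : ℕ, 1 ≤ j → j ≤ k0 → ∀ x ∈ Icc (0:ℝ) 1,
      |iteratedDeriv j f x| ≤ R ^ ((j : ℝ) / β) * (min (f x) (1 - f x)) ^ ((β - j) / β))
    (hHolder : ∀ x ∈ Icc (0:ℝ) 1, ∀ y ∈ Icc (0:ℝ) 1,
      |iteratedDeriv k0 f x - iteratedDeriv k0 f y| ≤ R * |x - y| ^ (β - k0))
    (a : ℝ) (ha : 0 < a)
    (haβ : (Real.exp a - 1) + a ^ β / (Nat.factorial k0) ≤ 1 / 2) :
    ∀ x ∈ Icc (0:ℝ) 1, ∀ h : ℝ, x + h ∈ Icc (0:ℝ) 1 →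
      |h| ≤ a * (min (f x) (1 - f x) / R) ^ (1 / β) →
      |f (x + h) - f x| ≤ min (f x) (1 - f x) / 2 ∧
      (1 / 4) * (f x * (1 - f x)) ≤ f (x + h) * (1 - f (x + h)) ∧
      f (x + h) * (1 - f (x + h)) ≤ (9 / 4) * (f x * (1 - f x)) := by
  intro x hx h hxh hh
  set m := min (f x) (1 - f x)
  have hm : 0 ≤ m := le_min (hrange x hx).1 (sub_nonneg.mpr (hrange x hx).2)
  have hholder : ∀ ξ ∈ uIcc x (x + h),
      |iteratedDeriv k0 f ξ - iteratedDeriv k0 f x| ≤ R * |h| ^ (β - k0) := fun ξ hξ => by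
    have hξx : |ξ - x| ≤ |h| := by simpa using abs_sub_left_of_mem_uIcc hξ
    refine (hHolder ξ (uIcc_subset_Icc hx hxh hξ) x hx).trans ?_
    gcongr
  have hrem : R * |h| ^ (β - k0) * |h| ^ k0 ≤ a ^ β * m := by
    rw [← rpow_natCast, mul_assoc, ← rpow_add' (abs_nonneg h) (by simpa using hβ.ne'),
      sub_add_cancel]
    exact mul_rpow_le_of_le_mul_rpow hβ hR hm ha.le (abs_nonneg h) hh
  have key : |f (x + h) - f x| ≤ m / 2 := by
    have htaylor := abs_sub_le_taylor_of_abs_iteratedDeriv_sub_le hf hholder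
    rw [add_sub_cancel_left] at htaylor
    calc |f (x + h) - f x|
        ≤ ∑ j ∈ Finset.Icc 1 k0, a ^ j * m / j ! + a ^ β * m / k0 ! := by
          refine htaylor.trans (add_le_add (Finset.sum_le_sum fun j hj => ?_) (by gcongr))
          obtain ⟨hj1, hjk⟩ := Finset.mem_Icc.mp hj
          exact div_le_div_of_nonneg_right (abs_mul_pow_le_of_abs_le_rpow_mul_rpow hβ hR hm ha.le
            (abs_nonneg h) hh (hderiv j hj1 hjk x hx)) (by positivity)
      _ ≤ ((exp a - 1) + a ^ β / k0 !) * m := by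
          simp only [mul_div_right_comm _ m]
          rw [← Finset.sum_mul, ← add_mul]
          gcongr
          exact sum_Icc_pow_div_factorial_le_exp_sub_one ha.le k0
      _ ≤ m / 2 := by nlinarith
  exact ⟨key, mul_one_sub_bounds_of_abs_sub_le key⟩

theorem stmt_4 (β : ℝ) (hβ : 0 < β) (k0 : ℕ) (hk0 : (k0 : ℝ) < β) (hk0' : β ≤ k0 + 1)
    (f : ℝ → ℝ) (R : ℝ) (hR : 0 < R)
    (hf : ContDiff ℝ k0 f)
    (hrange : ∀ x ∈ Icc (0:ℝ) 1, f x ∈ Icc (0:ℝ) 1)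
    (hderiv : ∀ j : ℕ, 1 ≤ j → j ≤ k0 → ∀ x ∈ Icc (0:ℝ) 1,
      |iteratedDeriv j f x| ≤ R ^ ((j : ℝ) / β) * (min (f x) (1 - f x)) ^ ((β - j) / β))
    (hHolder : ∀ x ∈ Icc (0:ℝ) 1, ∀ y ∈ Icc (0:ℝ) 1,
      |iteratedDeriv k0 f x - iteratedDeriv k0 f y| ≤ R * |x - y| ^ (β - k0))
    (a : ℝ) (ha : 0 < a)
    (haβ : (Real.exp a - 1) + a ^ β / (Nat.factorial k0) ≤ 1 / 2) :
    ∀ x ∈ Icc (0:ℝ) 1, ∀ h : ℝ, x + h ∈ Icc (0:ℝ) 1 →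
      |h| ≤ a * (min (f x) (1 - f x) / R) ^ (1 / β) →
      |f (x + h) - f x| ≤ min (f x) (1 - f x) / 2 ∧
      (1 / 4) * (f x * (1 - f x)) ≤ f (x + h) * (1 - f (x + h)) ∧
      f (x + h) * (1 - f (x + h)) ≤ (9 / 4) * (f x * (1 - f x)) :=
  stmt_4_general β hβ k0 hk0 f R hR hf hrange hderiv hHolder a ha haβ
end

section
/- Let f ∈ H^β and let a = a(β) be as in the local fluctuation lemma ((e^a-1) + a^β/⌊β⌋! ≤ 1/2). Fix x_0 with f(x_0) > 0 and suppose the interval I has length |I| ≤ a (f(x_0)/‖f‖_{H^β})^{1/β} and contains x_0. Then f(x) ≥ f(x_0)/2 > 0 for all x ∈ I, and the restriction of √f to I is ⌊β⌋-times differentiable with ⌊β⌋-th derivative Hölder of exponent β-⌊β⌋ and constant at most C(β) ‖f‖_{H^β} / √(f(x_0)). -/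
/-!
On the scale `1 / P`, `P = (R / f x₀) ^ (1 / β)`, the flatness bounds read `|f⁽ʲ⁾| ≤ f x₀ · P ^ j`.
Taylor's formula with Lagrange remainder then shows that on an interval of length `a / P` around
`x₀` the function `f` moves by at most `((e ^ a - 1) + a ^ β / k!) · f x₀ ≤ f x₀ / 2`. There
`g = √f ≥ √(f x₀ / 2)`, and Leibniz' rule for `g * g = f` expresses `2 g g⁽ᵐ⁾` through `f⁽ᵐ⁾` and
lower derivatives of `g`: by induction `|g⁽ʲ⁾| ≲ √(f x₀) · P ^ j`, and the same identity at two
points, with the mean value theorem for the lower derivatives, gives the Hölder bound on `g⁽ᵏ⁾`.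
-/

open Real Set Finset Nat

lemma taylorWithinEval_uIcc_eq_sum {f : ℝ → ℝ} {n k : ℕ} (hf : ContDiff ℝ n f) (hk : k ≤ n)
    {x₀ x : ℝ} (hx : x₀ ≠ x) :
    taylorWithinEval f k (uIcc x₀ x) x₀ x =
      ∑ j ∈ range (k + 1), iteratedDeriv j f x₀ * (x - x₀) ^ j / j ! := by
  rw [taylor_within_apply]
  refine sum_congr rfl fun j hj => ?_
  rw [iteratedDerivWithin_eq_iteratedDeriv (uniqueDiffOn_uIcc hx)
    (hf.of_le (by exact_mod_cast (mem_range_succ_iff.mp hj).trans hk)).contDiffAt left_mem_uIcc,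
    smul_eq_mul]
  ring

lemma abs_sub_taylor_le {f : ℝ → ℝ} {k : ℕ} (hf : ContDiff ℝ k f) {x₀ x M : ℝ}
    (hM : ∀ t ∈ uIcc x₀ x, |iteratedDeriv k f t - iteratedDeriv k f x₀| ≤ M) :
    |f x - ∑ j ∈ range (k + 1), iteratedDeriv j f x₀ * (x - x₀) ^ j / j !|
      ≤ M * |x - x₀| ^ k / k ! := by
  have hM0 : 0 ≤ M := (abs_nonneg _).trans (hM x₀ left_mem_uIcc)
  rcases eq_or_ne x₀ x with rfl | hx
  · have hsum : ∑ j ∈ range (k + 1), iteratedDeriv j f x₀ * (x₀ - x₀) ^ j / j ! = f x₀ := by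
      simp [sum_range_succ']
    rw [hsum, sub_self, abs_zero]
    positivity
  cases k with
  | zero => simpa using hM x right_mem_uIcc
  | succ m =>
    obtain ⟨ξ, hξ, hrem⟩ := taylor_mean_remainder_lagrange_iteratedDeriv hx hf.contDiffOn
    rw [taylorWithinEval_uIcc_eq_sum hf m.le_succ hx] at hrem
    have hξx : ξ ∈ uIcc x₀ x := uIoo_subset_uIcc_self hξ
    calc |f x - ∑ j ∈ range (m + 1 + 1), iteratedDeriv j f x₀ * (x - x₀) ^ j / j !|
        = |iteratedDeriv (m + 1) f ξ - iteratedDeriv (m + 1) f x₀| * |x - x₀| ^ (m + 1)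
            / (m + 1)! := by
          rw [sum_range_succ, ← sub_sub, hrem, ← sub_div, ← sub_mul, abs_div, abs_mul, abs_pow,
            Nat.abs_cast]
      _ ≤ M * |x - x₀| ^ (m + 1) / (m + 1)! := by gcongr; exact hM ξ hξx

lemma sum_range_pow_succ_div_factorial_le_exp_sub_one {a : ℝ} (ha : 0 ≤ a) (k : ℕ) :
    ∑ j ∈ range k, a ^ (j + 1) / (j + 1)! ≤ exp a - 1 := by
  have h := Real.sum_le_exp_of_nonneg ha (k + 1)
  rw [sum_range_succ'] at h
  simp only [pow_zero, factorial_zero, cast_one, div_one] at h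
  linarith

lemma abs_sum_taylor_succ_le {f : ℝ → ℝ} {k : ℕ} {F P a x₀ x : ℝ} (hF : 0 ≤ F) (hP : 0 ≤ P)
    (hder : ∀ j, 1 ≤ j → j ≤ k → |iteratedDeriv j f x₀| ≤ F * P ^ j)
    (hx : P * |x - x₀| ≤ a) :
    |∑ j ∈ range k, iteratedDeriv (j + 1) f x₀ * (x - x₀) ^ (j + 1) / (j + 1)!|
      ≤ (exp a - 1) * F := by
  have hδ : 0 ≤ P * |x - x₀| := by positivity
  refine (abs_sum_le_sum_abs _ _).trans ?_
  calc ∑ j ∈ range k, |iteratedDeriv (j + 1) f x₀ * (x - x₀) ^ (j + 1) / (j + 1)!|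
      ≤ ∑ j ∈ range k, F * (a ^ (j + 1) / (j + 1)!) := by
        refine sum_le_sum fun j hj => ?_
        rw [abs_div, abs_mul, abs_pow, Nat.abs_cast, mul_div_assoc']
        gcongr ?_ / _
        calc |iteratedDeriv (j + 1) f x₀| * |x - x₀| ^ (j + 1)
            ≤ F * P ^ (j + 1) * |x - x₀| ^ (j + 1) := by
              gcongr; exact hder _ (by omega) (by simpa using hj)
          _ = F * (P * |x - x₀|) ^ (j + 1) := by ring
          _ ≤ F * a ^ (j + 1) := by gcongr
    _ ≤ (exp a - 1) * F := by
        rw [← mul_sum, mul_comm]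
        gcongr
        exact sum_range_pow_succ_div_factorial_le_exp_sub_one (hδ.trans hx) k

lemma abs_sub_le_of_flat {f : ℝ → ℝ} {k : ℕ} (hf : ContDiff ℝ k f) {β F P a x₀ x : ℝ}
    (hkβ : (k : ℝ) < β) (hF : 0 ≤ F) (hP : 0 ≤ P)
    (hder : ∀ j, 1 ≤ j → j ≤ k → |iteratedDeriv j f x₀| ≤ F * P ^ j)
    (hhold : ∀ t ∈ uIcc x₀ x,
      |iteratedDeriv k f t - iteratedDeriv k f x₀| ≤ F * P ^ β * |t - x₀| ^ (β - k))
    (hx : P * |x - x₀| ≤ a) :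
    |f x - f x₀| ≤ (exp a - 1 + a ^ β / k !) * F := by
  have hβ : 0 < β := (Nat.cast_nonneg k).trans_lt hkβ
  have hrem := abs_sub_taylor_le hf (M := F * P ^ β * |x - x₀| ^ (β - k)) fun t ht =>
    (hhold t ht).trans <| mul_le_mul_of_nonneg_left
      (rpow_le_rpow (abs_nonneg _) (abs_sub_left_of_mem_uIcc ht) (by linarith)) (by positivity)
  have hrem' : F * P ^ β * |x - x₀| ^ (β - k) * |x - x₀| ^ k / k ! ≤ a ^ β / k ! * F := by
    have hpow : P ^ β * |x - x₀| ^ (β - k) * |x - x₀| ^ k = (P * |x - x₀|) ^ β := by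
      rw [← rpow_natCast, mul_assoc,
        ← rpow_add' (abs_nonneg _) (by rw [sub_add_cancel]; exact hβ.ne'), sub_add_cancel,
        mul_rpow hP (abs_nonneg _)]
    calc F * P ^ β * |x - x₀| ^ (β - k) * |x - x₀| ^ k / k !
        = F * (P * |x - x₀|) ^ β / k ! := by rw [← hpow]; ring
      _ ≤ F * a ^ β / k ! := by gcongr
      _ = a ^ β / k ! * F := by ring
  have hpoly := abs_sum_taylor_succ_le hF hP hder hx
  have hsplit : f x - f x₀ =
      (f x - ∑ j ∈ range (k + 1), iteratedDeriv j f x₀ * (x - x₀) ^ j / j !)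
        + ∑ j ∈ range k, iteratedDeriv (j + 1) f x₀ * (x - x₀) ^ (j + 1) / (j + 1)! := by
    rw [sum_range_succ']; simp only [iteratedDeriv_zero, pow_zero, factorial_zero]; ring
  rw [hsplit]
  refine (abs_add_le _ _).trans ?_
  linarith

lemma rpow_div_mul_rpow_sub_div {R F β : ℝ} (hR : 0 < R) (hF : 0 < F) (hβ : β ≠ 0) (t : ℝ) :
    R ^ (t / β) * F ^ ((β - t) / β) = F * ((R / F) ^ (1 / β)) ^ t := by
  rw [← rpow_mul (div_pos hR hF).le, one_div_mul_eq_div, div_rpow hR.le hF.le,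
    show (β - t) / β = 1 - t / β by field_simp, rpow_sub hF, rpow_one]
  field_simp

lemma rpow_le_mul_rpow_of_le_mul {y F c e : ℝ} (hy : 0 ≤ y) (hF : 0 ≤ F) (hc : 1 ≤ c)
    (he0 : 0 ≤ e) (he1 : e ≤ 1) (h : y ≤ c * F) : y ^ e ≤ c * F ^ e :=
  calc y ^ e ≤ (c * F) ^ e := rpow_le_rpow hy h he0
    _ = c ^ e * F ^ e := mul_rpow (by linarith) hF
    _ ≤ c * F ^ e := by gcongr; exact rpow_le_self_of_one_le hc he1

lemma abs_sum_choose_succ_mul_le {m : ℕ} {w : ℕ → ℝ} {W : ℝ} (hW : 0 ≤ W)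
    (hw : ∀ i < m, |w i| ≤ W) :
    |∑ i ∈ range m, ((m + 1).choose (i + 1) : ℝ) * w i| ≤ 2 ^ (m + 1) * W := by
  have hchoose : ∑ i ∈ range m, (m + 1).choose (i + 1) ≤ 2 ^ (m + 1) := by
    rw [← Nat.sum_range_choose, sum_range_succ' _ (m + 1)]
    exact (sum_le_sum_of_subset (range_subset_range.mpr m.le_succ)).trans le_self_add
  calc |∑ i ∈ range m, ((m + 1).choose (i + 1) : ℝ) * w i|
      ≤ ∑ i ∈ range m, ((m + 1).choose (i + 1) : ℝ) * W := by
        refine (abs_sum_le_sum_abs _ _).trans (sum_le_sum fun i hi => ?_)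
        rw [abs_mul, Nat.abs_cast]
        exact mul_le_mul_of_nonneg_left (hw i (mem_range.mp hi)) (by positivity)
    _ ≤ 2 ^ (m + 1) * W := by
        rw [← sum_mul]
        gcongr
        exact_mod_cast hchoose

lemma abs_mul_sub_mul_le {a a' b b' α β ε : ℝ} (ha : |a - a'| ≤ α * ε) (hb : |b - b'| ≤ β * ε)
    (ha' : |a'| ≤ α) (hb' : |b| ≤ β) : |a * b - a' * b'| ≤ 2 * (α * β) * ε := by
  have hα : 0 ≤ α := (abs_nonneg _).trans ha'
  calc |a * b - a' * b'| = |(a - a') * b + a' * (b - b')| := by congr 1; ring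
    _ ≤ α * ε * β + α * (β * ε) := by
        refine (abs_add_le _ _).trans (add_le_add ?_ ?_) <;> rw [abs_mul]
        · exact mul_le_mul ha hb' (abs_nonneg _) ((abs_nonneg _).trans ha)
        · exact mul_le_mul ha' hb (abs_nonneg _) hα
    _ = 2 * (α * β) * ε := by ring

def leibnizMiddle (u : ℕ → ℝ) (m : ℕ) : ℝ :=
  ∑ i ∈ range m, ((m + 1).choose (i + 1) : ℝ) * (u (i + 1) * u (m - i))

lemma abs_leibnizMiddle_le {u : ℕ → ℝ} {m : ℕ} {M P : ℝ} (hP : 0 ≤ P)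
    (hu : ∀ i ≤ m, |u i| ≤ M * P ^ i) :
    |leibnizMiddle u m| ≤ 2 ^ (m + 1) * (M ^ 2 * P ^ (m + 1)) := by
  refine abs_sum_choose_succ_mul_le (by positivity) fun i hi => ?_
  have h1 := hu (i + 1) (by omega)
  rw [abs_mul]
  calc _ ≤ M * P ^ (i + 1) * (M * P ^ (m - i)) :=
        mul_le_mul h1 (hu (m - i) (by omega)) (abs_nonneg _) ((abs_nonneg _).trans h1)
    _ = M ^ 2 * P ^ (i + 1 + (m - i)) := by ring
    _ = M ^ 2 * P ^ (m + 1) := by rw [show i + 1 + (m - i) = m + 1 by omega]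

lemma abs_leibnizMiddle_sub_le {u v : ℕ → ℝ} {m : ℕ} {M P ε : ℝ} (hP : 0 ≤ P) (hε : 0 ≤ ε)
    (hu : ∀ i ≤ m, |u i| ≤ M * P ^ i) (hv : ∀ i ≤ m, |v i| ≤ M * P ^ i)
    (huv : ∀ i ≤ m, |u i - v i| ≤ M * P ^ i * ε) :
    |leibnizMiddle u m - leibnizMiddle v m| ≤ 2 ^ (m + 1) * (2 * (M ^ 2 * P ^ (m + 1)) * ε) := by
  unfold leibnizMiddle
  simp_rw [← sum_sub_distrib, ← mul_sub]
  refine abs_sum_choose_succ_mul_le (by positivity) fun i hi => ?_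
  calc _ ≤ 2 * (M * P ^ (i + 1) * (M * P ^ (m - i))) * ε :=
        abs_mul_sub_mul_le (huv _ (by omega)) (huv _ (by omega)) (hv _ (by omega)) (hu _ (by omega))
    _ = 2 * (M ^ 2 * P ^ (i + 1 + (m - i))) * ε := by ring
    _ = 2 * (M ^ 2 * P ^ (m + 1)) * ε := by rw [show i + 1 + (m - i) = m + 1 by omega]

lemma abs_le_of_abs_two_mul_le {G g Δ T : ℝ} (hG : 0 < G) (hg : G ≤ g)
    (h : |2 * g * Δ| ≤ T * G ^ 2) : |Δ| ≤ T / 2 * G := by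
  have : G * (2 * |Δ|) ≤ G * (T * G) := by
    calc G * (2 * |Δ|) ≤ |2 * g * Δ| := by
          rw [abs_mul, abs_mul, abs_two, abs_of_pos (hG.trans_le hg)]
          nlinarith [abs_nonneg Δ]
      _ ≤ G * (T * G) := by linarith
  nlinarith [le_of_mul_le_mul_left this hG]

lemma abs_sub_le_of_abs_mul_self_sub_le {G a b T : ℝ} (hG : 0 < G) (ha : G ≤ a) (hb : G ≤ b)
    (h : |a * a - b * b| ≤ T * G ^ 2) : |a - b| ≤ T / 2 * G :=
  abs_le_of_abs_two_mul_le hG (g := (a + b) / 2) (by linarith) <| by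
    rwa [show 2 * ((a + b) / 2) * (a - b) = a * a - b * b by ring]

section SqrtDerivatives

variable {s : Set ℝ} {g : ℝ → ℝ}

lemma iteratedDerivWithin_mul_self_succ (hs : UniqueDiffOn ℝ s) {m : ℕ}
    (hg : ContDiffOn ℝ (m + 1) g s) {x : ℝ} (hx : x ∈ s) :
    iteratedDerivWithin (m + 1) (g * g) s x =
      2 * g x * iteratedDerivWithin (m + 1) g s x +
        leibnizMiddle (fun i => iteratedDerivWithin i g s x) m := by
  rw [leibnizMiddle, iteratedDerivWithin_mul hx hs (hg x hx) (hg x hx), sum_range_succ,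
    sum_range_succ']
  simp only [Nat.choose_self, Nat.choose_zero_right, Nat.sub_self, Nat.sub_zero,
    iteratedDerivWithin_zero, cast_one, Nat.add_sub_add_right, mul_assoc]
  ring

-- Solving the Leibniz identity `2 g g⁽ᵐ⁺¹⁾ = (g * g)⁽ᵐ⁺¹⁾ - ∑ …` for `g⁽ᵐ⁺¹⁾`.
noncomputable def sqrtDerivConst (A : ℝ) : ℕ → ℝ
  | 0 => A
  | m + 1 => max (sqrtDerivConst A m) ((A + 2 ^ (m + 1) * sqrtDerivConst A m ^ 2) / 2)

noncomputable def sqrtHolderConst (A : ℝ) (k : ℕ) : ℝ :=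
  (A + (2 ^ (k + 1) + 2) * sqrtDerivConst A k ^ 2) / 2

lemma sqrtHolderConst_pos {A : ℝ} (hA : 0 < A) (k : ℕ) : 0 < sqrtHolderConst A k := by
  unfold sqrtHolderConst; positivity

variable {k : ℕ} {A G P : ℝ}

lemma abs_iteratedDerivWithin_le_of_mul_self (hs : UniqueDiffOn ℝ s)
    (hg : ContDiffOn ℝ k g s) (hG : 0 < G) (hP : 0 ≤ P) (hgG : ∀ x ∈ s, G ≤ g x)
    (hf : ∀ j ≤ k, ∀ x ∈ s, |iteratedDerivWithin j (g * g) s x| ≤ A * G ^ 2 * P ^ j) :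
    ∀ j ≤ k, ∀ x ∈ s, |iteratedDerivWithin j g s x| ≤ sqrtDerivConst A k * G * P ^ j := by
  suffices ∀ m ≤ k, ∀ j ≤ m, ∀ x ∈ s,
      |iteratedDerivWithin j g s x| ≤ sqrtDerivConst A m * G * P ^ j from this k le_rfl
  intro m
  induction m with
  | zero =>
    intro _ j hj x hx
    obtain rfl : j = 0 := by omega
    have hgx := hgG x hx
    have hsq := hf 0 (Nat.zero_le _) x hx
    simp only [iteratedDerivWithin_zero, Pi.mul_apply, pow_zero, mul_one, abs_mul_self] at hsq ⊢
    rw [abs_of_pos (hG.trans_le hgx), sqrtDerivConst]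
    nlinarith
  | succ m ih =>
    intro hm j hj x hx
    set B := sqrtDerivConst A m
    have hB := ih (by omega)
    rcases Nat.lt_succ_iff_lt_or_eq.mp (Nat.lt_succ_of_le hj) with hj | rfl
    · exact (hB j (by omega) x hx).trans <| by gcongr; exact le_max_left _ _
    have hid := iteratedDerivWithin_mul_self_succ hs (hg.of_le (by exact_mod_cast hm)) hx
    have hmid := abs_leibnizMiddle_le hP (M := B * G) fun i hi => hB i hi x hx
    have htop : |2 * g x * iteratedDerivWithin (m + 1) g s x|
        ≤ (A + 2 ^ (m + 1) * B ^ 2) * P ^ (m + 1) * G ^ 2 := by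
      rw [eq_sub_of_add_eq hid.symm]
      refine (abs_sub _ _).trans ?_
      linarith [hf (m + 1) hm x hx]
    calc |iteratedDerivWithin (m + 1) g s x|
        ≤ (A + 2 ^ (m + 1) * B ^ 2) * P ^ (m + 1) / 2 * G :=
          abs_le_of_abs_two_mul_le hG (hgG x hx) htop
      _ = (A + 2 ^ (m + 1) * B ^ 2) / 2 * G * P ^ (m + 1) := by ring
      _ ≤ sqrtDerivConst A (m + 1) * G * P ^ (m + 1) := by gcongr; exact le_max_right _ _

lemma abs_iteratedDerivWithin_sub_le (hs : UniqueDiffOn ℝ s) (hconv : Convex ℝ s)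
    (hg : ContDiffOn ℝ k g s) {i : ℕ} (hi : i < k) {M ε x y : ℝ}
    (hM : ∀ z ∈ s, |iteratedDerivWithin (i + 1) g s z| ≤ M * P ^ (i + 1)) (hM0 : 0 ≤ M * P ^ i)
    (hε : P * |x - y| ≤ ε) (hx : x ∈ s) (hy : y ∈ s) :
    |iteratedDerivWithin i g s x - iteratedDerivWithin i g s y| ≤ M * P ^ i * ε := by
  have hmvt := hconv.norm_image_sub_le_of_norm_derivWithin_le
    (hg.differentiableOn_iteratedDerivWithin (by exact_mod_cast hi) hs)
    (fun z hz => by rw [← iteratedDerivWithin_succ]; exact hM z hz) hy hx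
  simp only [Real.norm_eq_abs] at hmvt
  calc _ ≤ M * P ^ (i + 1) * |x - y| := hmvt
    _ = M * P ^ i * (P * |x - y|) := by ring
    _ ≤ M * P ^ i * ε := mul_le_mul_of_nonneg_left hε hM0

-- `ε` stands for `(P * |x - y|) ^ θ`; all that is used is that it dominates `P * |x - y|`.
lemma abs_iteratedDerivWithin_sub_le_of_mul_self (hs : UniqueDiffOn ℝ s) (hconv : Convex ℝ s)
    (hg : ContDiffOn ℝ k g s) (hG : 0 < G) (hP : 0 ≤ P) (hgG : ∀ x ∈ s, G ≤ g x)
    (hf : ∀ j ≤ k, ∀ x ∈ s, |iteratedDerivWithin j (g * g) s x| ≤ A * G ^ 2 * P ^ j)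
    {x y ε : ℝ} (hx : x ∈ s) (hy : y ∈ s) (hε : P * |x - y| ≤ ε)
    (hfxy : |iteratedDerivWithin k (g * g) s x - iteratedDerivWithin k (g * g) s y|
      ≤ A * G ^ 2 * P ^ k * ε) :
    |iteratedDerivWithin k g s x - iteratedDerivWithin k g s y|
      ≤ sqrtHolderConst A k * G * P ^ k * ε := by
  unfold sqrtHolderConst
  set B := sqrtDerivConst A k
  have hB := abs_iteratedDerivWithin_le_of_mul_self hs hg hG hP hgG hf
  have hε0 : 0 ≤ ε := (by positivity : 0 ≤ P * |x - y|).trans hε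
  have hlow : ∀ i < k, |iteratedDerivWithin i g s x - iteratedDerivWithin i g s y|
      ≤ B * G * P ^ i * ε := fun i hi =>
    abs_iteratedDerivWithin_sub_le hs hconv hg hi (hB (i + 1) hi)
      ((abs_nonneg _).trans (hB i hi.le x hx)) hε hx hy
  cases k with
  | zero =>
    simp only [iteratedDerivWithin_zero, Pi.mul_apply, pow_zero, mul_one] at hfxy ⊢
    have := abs_sub_le_of_abs_mul_self_sub_le hG (hgG x hx) (hgG y hy) (T := A * ε)
      (by linarith)
    nlinarith [sq_nonneg B, mul_nonneg hG.le hε0]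
  | succ m =>
    have hidx := iteratedDerivWithin_mul_self_succ hs hg hx
    have hidy := iteratedDerivWithin_mul_self_succ hs hg hy
    set u : ℕ → ℝ → ℝ := fun i => iteratedDerivWithin i g s
    have hmid := abs_leibnizMiddle_sub_le (m := m) (M := B * G) hP hε0
      (fun i hi => hB i (by omega) x hx) (fun i hi => hB i (by omega) y hy)
      (fun i hi => hlow i (by omega))
    have hcross : |2 * u (m + 1) y * (g x - g y)| ≤ 2 * (B * G * P ^ (m + 1)) * (B * G * ε) := by
      have h0 := hlow 0 (by omega)
      simp only [pow_zero, mul_one] at h0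
      have h1 := hB (m + 1) le_rfl y hy
      rw [abs_mul, abs_mul, abs_two]
      exact mul_le_mul (by linarith) h0 (abs_nonneg _) (by linarith [abs_nonneg (u (m + 1) y)])
    set Df := iteratedDerivWithin (m + 1) (g * g) s x - iteratedDerivWithin (m + 1) (g * g) s y
    set Dm := leibnizMiddle (fun i => u i x) m - leibnizMiddle (fun i => u i y) m
    have htop : |2 * g x * (u (m + 1) x - u (m + 1) y)|
        ≤ (A + (2 ^ (m + 1 + 1) + 2) * B ^ 2) * P ^ (m + 1) * ε * G ^ 2 := by
      rw [show 2 * g x * (u (m + 1) x - u (m + 1) y) = Df - Dm - 2 * u (m + 1) y * (g x - g y) by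
        linear_combination -hidx + hidy]
      linear_combination abs_sub (Df - Dm) (2 * u (m + 1) y * (g x - g y)) + abs_sub Df Dm
        + hfxy + hmid + hcross
    calc _ ≤ (A + (2 ^ (m + 1 + 1) + 2) * B ^ 2) * P ^ (m + 1) * ε / 2 * G :=
          abs_le_of_abs_two_mul_le hG (hgG x hx) htop
      _ = _ := by ring

end SqrtDerivatives

lemma abs_iteratedDeriv_le_of_flat {f : ℝ → ℝ} {k : ℕ} {β R F x : ℝ} (hβ : 0 < β)
    (hkβ : (k : ℝ) < β) (hR : 0 < R) (hF : 0 < F) (hfx : 0 ≤ f x) (hup : f x ≤ 3 / 2 * F)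
    (hflat : ∀ j : ℕ, 1 ≤ j → j ≤ k →
      |iteratedDeriv j f x| ≤ R ^ ((j : ℝ) / β) * f x ^ ((β - j) / β)) :
    ∀ j ≤ k, |iteratedDeriv j f x| ≤ 3 / 2 * F * ((R / F) ^ (1 / β)) ^ j := by
  intro j hj
  rcases j.eq_zero_or_pos with rfl | hj1
  · rwa [iteratedDeriv_zero, pow_zero, mul_one, abs_of_nonneg hfx]
  have hjβ : (j : ℝ) ≤ β := by linarith [(Nat.cast_le.mpr hj : (j : ℝ) ≤ k)]
  have he0 : 0 ≤ (β - j) / β := div_nonneg (by linarith) hβ.le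
  have he1 : (β - j) / β ≤ 1 :=
    (div_le_one hβ).mpr (by linarith [(Nat.cast_nonneg j : (0 : ℝ) ≤ j)])
  calc |iteratedDeriv j f x| ≤ R ^ ((j : ℝ) / β) * f x ^ ((β - j) / β) := hflat j hj1 hj
    _ ≤ R ^ ((j : ℝ) / β) * (3 / 2 * F ^ ((β - j) / β)) := by
        gcongr; exact rpow_le_mul_rpow_of_le_mul hfx hF.le (by norm_num) he0 he1 hup
    _ = 3 / 2 * F * ((R / F) ^ (1 / β)) ^ j := by
        rw [← rpow_natCast, mul_assoc, ← rpow_div_mul_rpow_sub_div hR hF hβ.ne']; ring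

lemma abs_iteratedDerivWithin_sqrt_sub_le {f : ℝ → ℝ} {k : ℕ} {θ F P c d : ℝ} (hcd : c ≤ d)
    (hf : ContDiff ℝ k f) (hF : 0 < F) (hP : 0 < P) (hθ : θ ≤ 1)
    (hlow : ∀ x ∈ Icc c d, F / 2 ≤ f x)
    (hder : ∀ j ≤ k, ∀ x ∈ Icc c d, |iteratedDeriv j f x| ≤ 3 / 2 * F * P ^ j)
    (hdiam : ∀ x ∈ Icc c d, ∀ y ∈ Icc c d, P * |x - y| ≤ 1)
    (hhold : ∀ x ∈ Icc c d, ∀ y ∈ Icc c d,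
      |iteratedDeriv k f x - iteratedDeriv k f y| ≤ F * P ^ (k + θ) * |x - y| ^ θ) :
    ∀ x ∈ Icc c d, ∀ y ∈ Icc c d,
      |iteratedDerivWithin k (fun t => √(f t)) (Icc c d) x
          - iteratedDerivWithin k (fun t => √(f t)) (Icc c d) y|
        ≤ sqrtHolderConst 3 k * √F * P ^ (k + θ) * |x - y| ^ θ := by
  intro x hx y hy
  have hC := sqrtHolderConst_pos (by norm_num : (0 : ℝ) < 3) k
  rcases hcd.eq_or_lt with rfl | hcd
  · obtain rfl : x = y := by linarith [hx.1, hx.2, hy.1, hy.2]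
    simp only [sub_self, abs_zero]
    positivity
  have hs := uniqueDiffOn_Icc hcd
  have hfpos : ∀ x ∈ Icc c d, 0 < f x := fun x hx => (half_pos hF).trans_le (hlow x hx)
  have hG : √(F / 2) ^ 2 = F / 2 := sq_sqrt (half_pos hF).le
  have hsq : ∀ j ≤ k, ∀ x ∈ Icc c d,
      iteratedDerivWithin j ((fun t => √(f t)) * fun t => √(f t)) (Icc c d) x
        = iteratedDeriv j f x := fun j hj x hx =>
    (iteratedDerivWithin_congr (fun t ht => mul_self_sqrt (hfpos t ht).le) hx).trans
      (iteratedDerivWithin_eq_iteratedDeriv hs (hf.of_le (by exact_mod_cast hj)).contDiffAt hx)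
  have hPθ : P ^ ((k : ℝ) + θ) * |x - y| ^ θ = P ^ k * (P * |x - y|) ^ θ := by
    rw [rpow_add hP, mul_rpow hP.le (abs_nonneg _), rpow_natCast]; ring
  have hδ : 0 ≤ P * |x - y| := by positivity
  calc _ ≤ sqrtHolderConst 3 k * √(F / 2) * P ^ k * (P * |x - y|) ^ θ := by
        refine abs_iteratedDerivWithin_sub_le_of_mul_self hs (convex_Icc c d)
          (hf.contDiffOn.sqrt fun x hx => (hfpos x hx).ne') (sqrt_pos.mpr (half_pos hF)) hP.le
          (fun x hx => sqrt_le_sqrt (hlow x hx)) (fun j hj x hx => ?_) hx hy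
          (self_le_rpow_of_le_one hδ (hdiam x hx y hy) hθ) ?_
        · rw [hsq j hj x hx, hG]; linarith [hder j hj x hx]
        · rw [hsq k le_rfl x hx, hsq k le_rfl y hy, hG]
          have := hhold x hx y hy
          have : 0 ≤ F * P ^ k * (P * |x - y|) ^ θ := by positivity
          nlinarith
    _ ≤ sqrtHolderConst 3 k * √F * P ^ k * (P * |x - y|) ^ θ := by
        gcongr; exact half_le_self hF.le
    _ = _ := by rw [mul_assoc _ (P ^ k), ← hPθ]; ring

lemma mul_abs_sub_le_of_mem_Icc {P a c d x y : ℝ} (hP : 0 < P) (hlen : d - c ≤ a * P⁻¹)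
    (hx : x ∈ Icc c d) (hy : y ∈ Icc c d) : P * |x - y| ≤ a :=
  calc P * |x - y| ≤ P * (a * P⁻¹) := by
        gcongr
        exact (abs_sub_le_iff.mpr ⟨by linarith [hx.2, hy.1], by linarith [hx.1, hy.2]⟩).trans hlen
    _ = a := by field_simp

theorem stmt_16 (β : ℝ) (hβ : 0 < β) (k0 : ℕ) (hk0 : (k0 : ℝ) < β) (hk0' : β ≤ k0 + 1) :
    ∃ C : ℝ, 0 < C ∧
      ∀ (f : ℝ → ℝ) (R : ℝ), 0 < R →
      ContDiff ℝ k0 f →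
      (∀ x ∈ Icc (0:ℝ) 1, 0 ≤ f x) →
      (∀ j : ℕ, 1 ≤ j → j ≤ k0 → ∀ x ∈ Icc (0:ℝ) 1,
        |iteratedDeriv j f x| ≤ R ^ ((j : ℝ) / β) * f x ^ ((β - j) / β)) →
      (∀ x ∈ Icc (0:ℝ) 1, ∀ y ∈ Icc (0:ℝ) 1,
        |iteratedDeriv k0 f x - iteratedDeriv k0 f y| ≤ R * |x - y| ^ (β - k0)) →
      ∀ a : ℝ, 0 < a → (Real.exp a - 1) + a ^ β / (Nat.factorial k0) ≤ 1 / 2 →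
      ∀ x₀ ∈ Icc (0:ℝ) 1, 0 < f x₀ →
      ∀ c d : ℝ, c ≤ d → Icc c d ⊆ Icc (0:ℝ) 1 → x₀ ∈ Icc c d →
      d - c ≤ a * (f x₀ / R) ^ (1 / β) →
      (∀ x ∈ Icc c d, f x₀ / 2 ≤ f x) ∧
      ContDiffOn ℝ k0 (fun t => Real.sqrt (f t)) (Icc c d) ∧
      ∀ x ∈ Icc c d, ∀ y ∈ Icc c d,
        |iteratedDerivWithin k0 (fun t => Real.sqrt (f t)) (Icc c d) x -
          iteratedDerivWithin k0 (fun t => Real.sqrt (f t)) (Icc c d) y|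
          ≤ C * R / Real.sqrt (f x₀) * |x - y| ^ (β - k0) := by
  refine ⟨sqrtHolderConst 3 k0, sqrtHolderConst_pos (by norm_num) k0, ?_⟩
  intro f R hR hf hnn hflat hhold a ha hab x₀ hx₀ hfx₀ c d hcd hsub hx₀I hlen
  set F := f x₀
  set P := (R / F) ^ (1 / β) with hPdef
  have hP : 0 < P := rpow_pos_of_pos (div_pos hR hfx₀) _
  have hRP : R = F * P ^ β := by
    rw [hPdef, one_div, rpow_inv_rpow (div_pos hR hfx₀).le hβ.ne', mul_div_cancel₀ _ hfx₀.ne']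
  rw [← inv_div, inv_rpow (div_pos hR hfx₀).le] at hlen
  have hfluct : ∀ x ∈ Icc c d, |f x - F| ≤ F / 2 := fun x hx =>
    (abs_sub_le_of_flat hf hk0 hfx₀.le hP.le
      (fun j hj1 hj => (hflat j hj1 hj x₀ hx₀).trans_eq
        (by rw [rpow_div_mul_rpow_sub_div hR hfx₀ hβ.ne', rpow_natCast]))
      (fun t ht => by rw [← hRP]; exact hhold t (hsub (uIcc_subset_Icc hx₀I hx ht)) x₀ hx₀)
      (mul_abs_sub_le_of_mem_Icc hP hlen hx hx₀I)).trans (by nlinarith)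
  have hlow : ∀ x ∈ Icc c d, F / 2 ≤ f x := fun x hx => by linarith [(abs_le.mp (hfluct x hx)).1]
  have ha1 : a ≤ 1 := by
    have : 0 ≤ a ^ β / (k0 ! : ℝ) := by positivity
    linarith [add_one_le_exp a]
  refine ⟨hlow, hf.contDiffOn.sqrt fun x hx => (by linarith [hlow x hx] : 0 < f x).ne',
    fun x hx y hy => ?_⟩
  have hsqrt := abs_iteratedDerivWithin_sqrt_sub_le (θ := β - k0) hcd hf hfx₀ hP (by linarith)
    hlow (fun j hj x hx => abs_iteratedDeriv_le_of_flat hβ hk0 hR hfx₀ (hnn x (hsub hx))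
      (by linarith [(abs_le.mp (hfluct x hx)).2]) (fun j hj1 hj => hflat j hj1 hj x (hsub hx)) j hj)
    (fun x hx y hy => (mul_abs_sub_le_of_mem_Icc hP hlen hx hy).trans ha1)
    (fun x hx y hy => by rw [add_sub_cancel, ← hRP]; exact hhold x (hsub hx) y (hsub hy)) x hx y hy
  refine hsqrt.trans_eq ?_
  rw [add_sub_cancel, hRP, mul_div_assoc, mul_div_right_comm F, div_sqrt]
  ring
end
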